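/- Let L be a timed language definable by a K-acceptor. Then the equivalence ≈^{L,K} has finite index and is K-monotonic; moreover, ≈^{L,K} is the coarsest K-monotonic, L-preserving equivalence, i.e., every K-monotonic, L-preserving equivalence ≈ satisfies: u ≈ v implies u ≈^{L,K} v. -/

import Mathlib

open scoped NNReal Classical

namespace IRTA

/-- A timestamp is a finite sequence of non-negative reals. -/
abbrev Timestamp : Type := List ℝ≥0

/-- A timed word is a finite sequence of (delay, letter) pairs. -/
abbrev TimedWord (A : Type) : Type := List (ℝ≥0 × A)

/-- Fractional part of a non-negative real. -/
noncomputable def fracPart (x : ℝ≥0) : ℝ≥0 := x - (⌊x⌋₊ : ℝ≥0)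

/-- `x` is a natural-number value. -/
def IsNatVal (x : ℝ≥0) : Prop := ∃ m : ℕ, x = (m : ℝ≥0)

/-- Region equivalence `≡^K`. -/
def RegEq (K : ℕ) (x y : ℝ≥0) : Prop :=
  (⌊x⌋₊ = ⌊y⌋₊ ∧ (fracPart x = 0 ↔ fracPart y = 0)) ∨ ((K : ℝ≥0) < x ∧ (K : ℝ≥0) < y)

/-- One step of the (greedy) clock evolution: reset whenever the value is an
integer between `0` and `K`. -/
noncomputable def resetStep (K : ℕ) (v : ℝ≥0) : ℝ≥0 :=
  if ∃ m : ℕ, m ≤ K ∧ v = (m : ℝ≥0) then 0 else v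

/-- Auxiliary function computing `c^K` with accumulator `v`. -/
noncomputable def cKAux (K : ℕ) : ℝ≥0 → Timestamp → ℝ≥0
  | v, [] => v
  | v, t :: d => cKAux K (resetStep K (v + t)) d

/-- `c^K(d)`: the sum of the delays after the last integral position of `d`. -/
noncomputable def cK (K : ℕ) (d : Timestamp) : ℝ≥0 := cKAux K 0 d

/-- `c^K` of a timed word is `c^K` of its timestamp. -/
noncomputable def cKW {A : Type} (K : ℕ) (w : TimedWord A) : ℝ≥0 :=
  cK K (w.map Prod.fst)

/-- `c^K_⊤` : `c^K` truncated at `K`. -/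
noncomputable def cKTop {A : Type} (K : ℕ) (w : TimedWord A) : WithTop ℝ≥0 :=
  if cKW K w ≤ (K : ℝ≥0) then ((cKW K w : ℝ≥0) : WithTop ℝ≥0) else ⊤

/-! ### Clock constraints and one-clock timed automata -/

/-- Clock constraints `φ ::= x < m | m < x | x = m | φ ∧ φ`. -/
inductive CC : Type where
  | lt : ℕ → CC
  | gt : ℕ → CC
  | eq : ℕ → CC
  | and : CC → CC → CC

/-- Satisfaction of a clock constraint by a clock value. -/
def CC.sat : CC → ℝ≥0 → Prop
  | .lt m, x => x < (m : ℝ≥0)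
  | .gt m, x => (m : ℝ≥0) < x
  | .eq m, x => x = (m : ℝ≥0)
  | .and φ ψ, x => φ.sat x ∧ ψ.sat x

/-- The largest constant appearing in a clock constraint. -/
def CC.maxConst : CC → ℕ
  | .lt m => m
  | .gt m => m
  | .eq m => m
  | .and φ ψ => max φ.maxConst ψ.maxConst

/-- A transition of a one-clock timed automaton; `reset = true` means the
clock is reset (the `r = 0` case). -/
structure TTrans (Q A : Type) where
  src : Q
  dst : Q
  lab : A
  guard : CC
  reset : Bool

/-- A one-clock timed automaton. -/
structure TA (A : Type) where
  Q : Type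
  init : Q
  final : Set Q
  trans : Set (TTrans Q A)

/-- The automaton has finitely many states and transitions. -/
def TA.IsFinite {A : Type} (M : TA A) : Prop := Finite M.Q ∧ M.trans.Finite

/-- Runs of a one-clock timed automaton between configurations. -/
inductive Steps {A : Type} (M : TA A) : M.Q × ℝ≥0 → TimedWord A → M.Q × ℝ≥0 → Prop
  | nil (c : M.Q × ℝ≥0) : Steps M c [] c
  | cons {q : M.Q} {ν t : ℝ≥0} {a : A} {w : TimedWord A} {c : M.Q × ℝ≥0}
      (θ : TTrans M.Q A) (hθ : θ ∈ M.trans) (hsrc : θ.src = q) (hlab : θ.lab = a)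
      (hg : θ.guard.sat (ν + t))
      (hrest : Steps M (θ.dst, if θ.reset then 0 else ν + t) w c) :
      Steps M (q, ν) ((t, a) :: w) c

/-- The language of `M` from a given configuration. -/
def TA.LangFrom {A : Type} (M : TA A) (c : M.Q × ℝ≥0) : Set (TimedWord A) :=
  {w | ∃ q' : M.Q, ∃ ν' : ℝ≥0, Steps M c w (q', ν') ∧ q' ∈ M.final}

/-- The language of `M` (from the initial configuration). -/
def TA.Lang {A : Type} (M : TA A) : Set (TimedWord A) := M.LangFrom (M.init, 0)

/-- Determinism: distinct transitions with the same source and letter have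
disjoint guards. -/
def TA.Deterministic {A : Type} (M : TA A) : Prop :=
  ∀ θ₁ ∈ M.trans, ∀ θ₂ ∈ M.trans, θ₁ ≠ θ₂ → θ₁.src = θ₂.src → θ₁.lab = θ₂.lab →
    ∀ x : ℝ≥0, ¬ (θ₁.guard.sat x ∧ θ₂.guard.sat x)

/-- Completeness: every timed word admits a run from the initial configuration. -/
def TA.Complete {A : Type} (M : TA A) : Prop :=
  ∀ w : TimedWord A, ∃ c : M.Q × ℝ≥0, Steps M (M.init, 0) w c

/-- A 1-IRTA: every resetting transition has an equality guard. -/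
def TA.IsIRTA {A : Type} (M : TA A) : Prop :=
  ∀ θ ∈ M.trans, θ.reset = true → ∃ m : ℕ, θ.guard = CC.eq m

/-- Guards allowed in a strict 1-IRTA with constant `K`. -/
def StrictGuard (K : ℕ) (φ : CC) : Prop :=
  (∃ m : ℕ, φ = CC.eq m) ∨ (∃ m : ℕ, φ = CC.and (CC.gt m) (CC.lt (m + 1))) ∨ φ = CC.gt K

/-- Strictness with constant `K`: every guard is of one of the allowed forms
and a guard is an equality iff the transition resets. -/
def TA.IsStrict {A : Type} (M : TA A) (K : ℕ) : Prop :=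
  ∀ θ ∈ M.trans, StrictGuard K θ.guard ∧ ((∃ m : ℕ, θ.guard = CC.eq m) ↔ θ.reset = true)

/-- All constants appearing in guards are at most `K`. -/
def TA.MaxConstLE {A : Type} (M : TA A) (K : ℕ) : Prop :=
  ∀ θ ∈ M.trans, θ.guard.maxConst ≤ K

/-- `M` reaches the same control state on reading `u` and `v` from the initial
configuration. -/
def TA.SameState {A : Type} (M : TA A) (u v : TimedWord A) : Prop :=
  ∃ q : M.Q, ∃ ν ν' : ℝ≥0, Steps M (M.init, 0) u (q, ν) ∧ Steps M (M.init, 0) v (q, ν')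

/-- A `K`-acceptor. -/
def IsKAcceptor {A : Type} (M : TA A) (K : ℕ) : Prop :=
  M.IsFinite ∧ M.Complete ∧ M.Deterministic ∧ M.IsIRTA ∧ M.IsStrict K ∧ M.MaxConstLE K ∧
    ∀ u v : TimedWord A, M.SameState u v → RegEq K (cKW K u) (cKW K v)

/-! ### Equivalences on timed words -/

/-- `L`-preservation of a relation on timed words. -/
def LPreserving {A : Type} (L : Set (TimedWord A)) (r : TimedWord A → TimedWord A → Prop) :
    Prop :=
  ∀ u v : TimedWord A, r u v → (u ∈ L ↔ v ∈ L)

/-- `K`-monotonicity of a relation on timed words. -/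
def KMonotonic {A : Type} (K : ℕ) (r : TimedWord A → TimedWord A → Prop) : Prop :=
  ∀ u v : TimedWord A, r u v →
    RegEq K (cKW K u) (cKW K v) ∧
      ∀ (a : A) (t t' : ℝ≥0), RegEq K (cKW K u + t) (cKW K v + t') →
        r (u ++ [(t, a)]) (v ++ [(t', a)])

/-- Finite index: there are finitely many classes `{v | r u v}`. -/
def FiniteIndex {A : Type} (r : TimedWord A → TimedWord A → Prop) : Prop :=
  Set.Finite (Set.range fun u : TimedWord A => {v : TimedWord A | r u v})

/-! ### The rescaling maps -/

/-- The bijection `f_{λ→λ'}` of the open unit interval. -/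
noncomputable def fScale (lam lam' t : ℝ≥0) : ℝ≥0 :=
  if t ≤ lam then (lam' / lam) * t else lam' + ((1 - lam') / (1 - lam)) * (t - lam)

/-- The new delay `t'` computed from the current clock values `y, y'` and delay `t`. -/
noncomputable def tauStep (K : ℕ) (y y' t : ℝ≥0) : ℝ≥0 :=
  if (IsNatVal y ∧ IsNatVal y') ∨ ((K : ℝ≥0) < y ∧ (K : ℝ≥0) < y') then t
  else (⌊t⌋₊ : ℝ≥0) + fScale (1 - fracPart y) (1 - fracPart y') (fracPart t)

/-- Auxiliary rescaling map on timestamps, carrying the current clock values. -/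
noncomputable def tauAux (K : ℕ) : ℝ≥0 → ℝ≥0 → Timestamp → Timestamp
  | _, _, [] => []
  | y, y', t :: d =>
      tauStep K y y' t ::
        tauAux K (resetStep K (y + t)) (resetStep K (y' + tauStep K y y' t)) d

/-- The rescaling map `τ_{x→x'}` on timestamps. -/
noncomputable def tau (K : ℕ) (x x' : ℝ≥0) (d : Timestamp) : Timestamp :=
  tauAux K (resetStep K x) (resetStep K x') d

/-- Auxiliary rescaling map on timed words. -/
noncomputable def tauWAux {A : Type} (K : ℕ) : ℝ≥0 → ℝ≥0 → TimedWord A → TimedWord A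
  | _, _, [] => []
  | y, y', (t, a) :: w =>
      (tauStep K y y' t, a) ::
        tauWAux K (resetStep K (y + t)) (resetStep K (y' + tauStep K y y' t)) w

/-- The rescaling map `τ_{x→x'}` on timed words. -/
noncomputable def tauW {A : Type} (K : ℕ) (x x' : ℝ≥0) (w : TimedWord A) : TimedWord A :=
  tauWAux K (resetStep K x) (resetStep K x') w

/-! ### Residuals and the syntactic equivalence -/

/-- The residual language `u^{-1}L`. -/
def residual {A : Type} (L : Set (TimedWord A)) (u : TimedWord A) : Set (TimedWord A) :=
  {w : TimedWord A | u ++ w ∈ L}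

/-- The syntactic equivalence `≈^{L,K}`. -/
def ApproxLK {A : Type} (L : Set (TimedWord A)) (K : ℕ) (u v : TimedWord A) : Prop :=
  RegEq K (cKW K u) (cKW K v) ∧
    (tauW K (cKW K u) (cKW K v)) '' (residual L u) = residual L v

/-! ### The automaton built from a monotonic equivalence -/

/-- The region guard `φ([t])`. -/
noncomputable def phiOf (K : ℕ) (t : ℝ≥0) : CC :=
  if t ≤ (K : ℝ≥0) then
    (if IsNatVal t then CC.eq ⌊t⌋₊ else CC.and (CC.gt ⌊t⌋₊) (CC.lt (⌊t⌋₊ + 1)))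
  else CC.gt K

/-- The automaton `A_≈` built from an equivalence `s` on timed words. -/
noncomputable def Aapprox {A : Type} (L : Set (TimedWord A)) (K : ℕ)
    (s : Setoid (TimedWord A)) : TA A where
  Q := Quotient s
  init := Quotient.mk s ([] : TimedWord A)
  final := {q : Quotient s | ∃ u : TimedWord A, q = Quotient.mk s u ∧ u ∈ L}
  trans := {θ : TTrans (Quotient s) A |
    ∃ (u : TimedWord A) (a : A) (t : ℝ≥0),
      θ.src = Quotient.mk s u ∧ θ.dst = Quotient.mk s (u ++ [(t, a)]) ∧ θ.lab = a ∧
      θ.guard = phiOf K (cKW K u + t) ∧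
      (θ.reset = true ↔ ∃ m : ℕ, m ≤ K ∧ cKW K u + t = (m : ℝ≥0))}

/-! ### Half-integral and small words -/

/-- Every delay has fractional part `0` or `1/2`. -/
def HalfIntegral {A : Type} (w : TimedWord A) : Prop :=
  ∀ p ∈ w, fracPart p.1 = 0 ∨ fracPart p.1 = 1 / 2

/-- Every delay is `< K + 1`. -/
def SmallWord {A : Type} (K : ℕ) (w : TimedWord A) : Prop :=
  ∀ p ∈ w, p.1 < (K : ℝ≥0) + 1

/-- The delays of `Σ_K`: half-integral values `≤ K + 1/2`. -/
def IsSigmaK (K : ℕ) (t : ℝ≥0) : Prop :=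
  (fracPart t = 0 ∨ fracPart t = 1 / 2) ∧ t ≤ (K : ℝ≥0) + 1 / 2

/-- Words over `Σ_K` (small half-integral words). -/
def SigmaWord {A : Type} (K : ℕ) (w : TimedWord A) : Prop :=
  ∀ p ∈ w, IsSigmaK K p.1



/-! ### `K`-acceptors with their region representatives -/

/-- A `K`-acceptor bundled with the half-integral representative of the
unique region of each state. -/
structure KAcc (A : Type) (K : ℕ) where
  M : TA A
  acc : IsKAcceptor M K
  reg : M.Q → ℝ≥0
  regHalf : ∀ q : M.Q, fracPart (reg q) = 0 ∨ fracPart (reg q) = 1 / 2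
  regLe : ∀ q : M.Q, reg q ≤ (K : ℝ≥0) + 1 / 2
  regSpec : ∀ (w : TimedWord A) (q : M.Q) (x : ℝ≥0),
    Steps M (M.init, 0) w (q, x) → RegEq K x (reg q)

/-- The minimization equivalences `∼^i` on the states of a `K`-acceptor. -/
def simEq {A : Type} {K : ℕ} (B : KAcc A K) : ℕ → B.M.Q → B.M.Q → Prop
  | 0, p, q => B.reg p = B.reg q ∧ (p ∈ B.M.final ↔ q ∈ B.M.final)
  | i + 1, p, q => simEq B i p q ∧
      ∀ (t : ℝ≥0) (a : A), IsSigmaK K t →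
        ∀ θ₁ θ₂ : TTrans B.M.Q A, θ₁ ∈ B.M.trans → θ₂ ∈ B.M.trans →
          θ₁.src = p → θ₂.src = q → θ₁.lab = a → θ₂.lab = a →
          θ₁.guard = phiOf K t → θ₂.guard = phiOf K t →
          simEq B i θ₁.dst θ₂.dst

/-- The quotient automaton `B/∼^m`. -/
noncomputable def quotTA {A : Type} {K : ℕ} (B : KAcc A K) (m : ℕ) : TA A where
  Q := Quot (simEq B m)
  init := Quot.mk (simEq B m) B.M.init
  final := {c : Quot (simEq B m) | ∃ q ∈ B.M.final, c = Quot.mk (simEq B m) q}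
  trans := {θ : TTrans (Quot (simEq B m)) A |
    ∃ θ₀ ∈ B.M.trans,
      θ.src = Quot.mk (simEq B m) θ₀.src ∧ θ.dst = Quot.mk (simEq B m) θ₀.dst ∧
      θ.lab = θ₀.lab ∧ θ.guard = θ₀.guard ∧ θ.reset = θ₀.reset}

/-! ### Observation tables -/

/-- An observation table over `Σ_K`. -/
structure ObsTable (A : Type) (K : ℕ) where
  U1 : Set (TimedWord A)
  E : Set (TimedWord A)
  val : TimedWord A → TimedWord A → Bool
  U1fin : U1.Finite
  Efin : E.Finite
  U1sigma : ∀ u ∈ U1, SigmaWord K u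
  Esigma : ∀ e ∈ E, SigmaWord K e
  epsU1 : ([] : TimedWord A) ∈ U1
  prefixClosed : ∀ (u : TimedWord A) (x : ℝ≥0 × A), u ++ [x] ∈ U1 → u ∈ U1
  epsE : ([] : TimedWord A) ∈ E
  suffixClosed : ∀ (x : ℝ≥0 × A) (e : TimedWord A), x :: e ∈ E → e ∈ E

/-- The set `U2` of one-letter `Σ_K`-extensions of `U1`. -/
def obsU2 {A : Type} {K : ℕ} (T : ObsTable A K) : Set (TimedWord A) :=
  {w : TimedWord A | ∃ u ∈ T.U1, ∃ (t : ℝ≥0) (a : A), IsSigmaK K t ∧ w = u ++ [(t, a)]}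

/-- `R(u)`: the row of `u` (restricted to `E`) together with `c^K_⊤(u)`. -/
noncomputable def Rof {A : Type} {K : ℕ} (T : ObsTable A K) (u : TimedWord A) :
    ({e : TimedWord A // e ∈ T.E} → Bool) × WithTop ℝ≥0 :=
  (fun e => T.val u e.1, cKTop K u)

/-- The table is closed. -/
def ObsTable.Closed {A : Type} {K : ℕ} (T : ObsTable A K) : Prop :=
  ∀ w ∈ obsU2 T, ∃ u ∈ T.U1, Rof T w = Rof T u

/-- The table is consistent. -/
def ObsTable.Consistent {A : Type} {K : ℕ} (T : ObsTable A K) : Prop :=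
  ∀ u ∈ T.U1, ∀ w ∈ T.U1, Rof T u = Rof T w →
    ∀ (t : ℝ≥0) (a : A), IsSigmaK K t → Rof T (u ++ [(t, a)]) = Rof T (w ++ [(t, a)])

/-- The automaton `A_𝒯` induced by a (closed and consistent) observation table. -/
noncomputable def ATable {A : Type} {K : ℕ} (T : ObsTable A K) : TA A where
  Q := {f : ({e : TimedWord A // e ∈ T.E} → Bool) × WithTop ℝ≥0 // ∃ u ∈ T.U1, f = Rof T u}
  init := ⟨Rof T [], ⟨[], T.epsU1, rfl⟩⟩
  final := {q | ∃ u ∈ T.U1, q.1 = Rof T u ∧ T.val u [] = true}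
  trans := {θ | ∃ u ∈ T.U1, ∃ (t : ℝ≥0) (a : A), IsSigmaK K t ∧
      θ.src.1 = Rof T u ∧ θ.dst.1 = Rof T (u ++ [(t, a)]) ∧ θ.lab = a ∧
      θ.guard = phiOf K (cKW K u + t) ∧
      (θ.reset = true ↔ ∃ m : ℕ, m ≤ K ∧ cKW K u + t = (m : ℝ≥0))}

/-- A `K`-acceptor is consistent with the observation table `𝒯`. -/
def ConsistentWith {A : Type} {K : ℕ} (M : TA A) (T : ObsTable A K) : Prop :=
  ∀ w : TimedWord A, (w ∈ T.U1 ∨ w ∈ obsU2 T) → ∀ e ∈ T.E,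
    ∀ (q : M.Q) (ν : ℝ≥0), Steps M (M.init, 0) (w ++ e) (q, ν) →
      (q ∈ M.final ↔ T.val w e = true)

/-- Isomorphism of one-clock timed automata. -/
structure TAIso {A : Type} (M N : TA A) where
  toEquiv : M.Q ≃ N.Q
  init_eq : toEquiv M.init = N.init
  final_iff : ∀ q : M.Q, q ∈ M.final ↔ toEquiv q ∈ N.final
  trans_iff : ∀ θ : TTrans M.Q A,
    θ ∈ M.trans ↔
      (⟨toEquiv θ.src, toEquiv θ.dst, θ.lab, θ.guard, θ.reset⟩ : TTrans N.Q A) ∈ N.trans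

/-!
Reading `u`, a `K`-acceptor reaches a configuration `(q, c^K(u))`: strictness makes it reset
exactly at the integers `≤ K`. The rescaling `τ_{x→x'}` only stretches fractional parts inside
the current unit interval, so it keeps the clock of every run in the same region; as guards with
constants `≤ K` cannot separate region-equivalent values, a run from `(q, x)` on `w` transfers to
a run from `(q, x')` on `τ_{x→x'}(w)` through the same states. Hence words leading to the same
state are `≈^{L,K}`-equivalent, which gives finite index, and together with the fact that
`τ_{u→v}` maps one-letter extensions of `u` to equivalent extensions of `v`, also
`K`-monotonicity. Conversely, a `K`-monotonic `≈` with `u ≈ v` can be pushed letter by letter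
along `w` and `τ_{u→v}(w)`, and `L`-preservation then gives `uw ∈ L ↔ v τ_{u→v}(w) ∈ L`.
-/

lemma natCast_floor_add_fracPart (x : ℝ≥0) : (⌊x⌋₊ : ℝ≥0) + fracPart x = x :=
  add_tsub_cancel_of_le (Nat.floor_le zero_le)

lemma fracPart_lt_one (x : ℝ≥0) : fracPart x < 1 := by
  rw [fracPart, tsub_lt_iff_left (Nat.floor_le zero_le)]
  exact Nat.lt_floor_add_one x

lemma floor_natCast_add (k : ℕ) {β : ℝ≥0} (hβ : β < 1) : ⌊(k : ℝ≥0) + β⌋₊ = k := by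
  rw [add_comm, Nat.floor_add_natCast zero_le, Nat.floor_eq_zero.2 hβ, zero_add]

lemma fracPart_natCast_add (k : ℕ) {β : ℝ≥0} (hβ : β < 1) : fracPart ((k : ℝ≥0) + β) = β := by
  rw [fracPart, floor_natCast_add k hβ, add_tsub_cancel_left]

lemma fracPart_natCast (m : ℕ) : fracPart (m : ℝ≥0) = 0 := by
  simpa using fracPart_natCast_add m one_pos

lemma eq_natCast_iff_fracPart_floor {x : ℝ≥0} {m : ℕ} :
    x = m ↔ fracPart x = 0 ∧ ⌊x⌋₊ = m := by
  constructor
  · rintro rfl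
    exact ⟨fracPart_natCast m, Nat.floor_natCast m⟩
  · rintro ⟨h0, hm⟩
    rw [← natCast_floor_add_fracPart x, h0, hm, add_zero]

lemma fracPart_eq_zero_iff (x : ℝ≥0) : fracPart x = 0 ↔ IsNatVal x :=
  ⟨fun h => ⟨⌊x⌋₊, eq_natCast_iff_fracPart_floor.2 ⟨h, rfl⟩⟩,
    fun ⟨_, hm⟩ => (eq_natCast_iff_fracPart_floor.1 hm).1⟩

lemma one_sub_fracPart_pos (x : ℝ≥0) : 0 < 1 - fracPart x :=
  tsub_pos_of_lt (fracPart_lt_one x)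

lemma one_sub_fracPart_lt_one {x : ℝ≥0} (hx : ¬ IsNatVal x) : 1 - fracPart x < 1 :=
  tsub_lt_self one_pos (pos_iff_ne_zero.2 (mt (fracPart_eq_zero_iff x).1 hx))

namespace RegEq

variable {K : ℕ} {x y z : ℝ≥0}

protected lemma refl (K : ℕ) (x : ℝ≥0) : RegEq K x x := Or.inl ⟨rfl, Iff.rfl⟩

protected lemma symm (h : RegEq K x y) : RegEq K y x := by
  rcases h with ⟨h1, h2⟩ | ⟨h1, h2⟩
  · exact Or.inl ⟨h1.symm, h2.symm⟩
  · exact Or.inr ⟨h2, h1⟩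

lemma lt_natCast_iff (h : RegEq K x y) {m : ℕ} (hm : m ≤ K) : x < m ↔ y < m := by
  have hmK : (m : ℝ≥0) ≤ K := Nat.cast_le.2 hm
  rcases h with ⟨hfl, -⟩ | ⟨hx, hy⟩
  · rw [← Nat.floor_lt zero_le, ← Nat.floor_lt zero_le, hfl]
  · exact iff_of_false (hmK.trans hx.le).not_gt (hmK.trans hy.le).not_gt

lemma eq_natCast_iff (h : RegEq K x y) {m : ℕ} (hm : m ≤ K) : x = m ↔ y = m := by
  have hmK : (m : ℝ≥0) ≤ K := Nat.cast_le.2 hm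
  rcases h with ⟨hfl, hfr⟩ | ⟨hx, hy⟩
  · rw [eq_natCast_iff_fracPart_floor, eq_natCast_iff_fracPart_floor, hfl, hfr]
  · exact iff_of_false (hmK.trans_lt hx).ne' (hmK.trans_lt hy).ne'

lemma natCast_lt_iff (h : RegEq K x y) {m : ℕ} (hm : m ≤ K) : (m : ℝ≥0) < x ↔ (m : ℝ≥0) < y := by
  rw [← not_le, ← not_le, le_iff_lt_or_eq, le_iff_lt_or_eq, h.lt_natCast_iff hm,
    h.eq_natCast_iff hm]

protected lemma trans (h : RegEq K x y) (h' : RegEq K y z) : RegEq K x z := by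
  rcases id h with ⟨h1, h2⟩ | ⟨hx, -⟩ <;> rcases id h' with ⟨h1', h2'⟩ | ⟨hy, hz⟩
  · exact Or.inl ⟨h1.trans h1', h2.trans h2'⟩
  · exact Or.inr ⟨(h.natCast_lt_iff le_rfl).2 hy, hz⟩
  · exact Or.inr ⟨hx, (h'.natCast_lt_iff le_rfl).1 ((h.natCast_lt_iff le_rfl).1 hx)⟩
  · exact Or.inr ⟨hx, hz⟩

lemma isNatVal_or_lt_iff (h : RegEq K x y) :
    (IsNatVal x ∨ (K : ℝ≥0) < x) ↔ (IsNatVal y ∨ (K : ℝ≥0) < y) := by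
  rcases id h with ⟨-, hfr⟩ | ⟨hx, hy⟩
  · rw [← fracPart_eq_zero_iff, ← fracPart_eq_zero_iff, hfr, h.natCast_lt_iff le_rfl]
  · exact iff_of_true (Or.inr hx) (Or.inr hy)

lemma floor_eq (h : RegEq K x y) (hx : ¬ (K : ℝ≥0) < x) : ⌊x⌋₊ = ⌊y⌋₊ := by
  rcases h with ⟨hfl, -⟩ | ⟨hx', -⟩
  exacts [hfl, absurd hx' hx]

lemma resetStep (h : RegEq K x y) : RegEq K (resetStep K x) (resetStep K y) := by
  have hiff : (∃ m : ℕ, m ≤ K ∧ x = m) ↔ ∃ m : ℕ, m ≤ K ∧ y = m :=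
    exists_congr fun m => and_congr_right fun hm => h.eq_natCast_iff hm
  unfold IRTA.resetStep
  by_cases hx : ∃ m : ℕ, m ≤ K ∧ x = m
  · rw [if_pos hx, if_pos (hiff.1 hx)]
    exact RegEq.refl K 0
  · rwa [if_neg hx, if_neg (mt hiff.2 hx)]

end RegEq

lemma CC.sat_iff_of_regEq {K : ℕ} {x y : ℝ≥0} (h : RegEq K x y) :
    ∀ φ : CC, φ.maxConst ≤ K → (φ.sat x ↔ φ.sat y)
  | .lt _, hφ => h.lt_natCast_iff hφ
  | .gt _, hφ => h.natCast_lt_iff hφ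
  | .eq _, hφ => h.eq_natCast_iff hφ
  | .and φ ψ, hφ =>
    and_congr (sat_iff_of_regEq h φ (le_of_max_le_left hφ))
      (sat_iff_of_regEq h ψ (le_of_max_le_right hφ))

section fScale

variable {lam lam' lam'' s : ℝ≥0}

lemma fScale_lt_of_lt (hl : 0 < lam) (hl' : 0 < lam') (hs : s < lam) :
    fScale lam lam' s < lam' := by
  rw [fScale, if_pos hs.le]
  simpa [div_mul_cancel₀ _ hl.ne'] using mul_lt_mul_of_pos_left hs (div_pos hl' hl)

lemma fScale_self_left (hl : 0 < lam) : fScale lam lam' lam = lam' := by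
  rw [fScale, if_pos le_rfl, div_mul_cancel₀ _ hl.ne']

lemma lt_fScale_of_lt (hl1 : lam < 1) (hl1' : lam' < 1) (hs : lam < s) :
    lam' < fScale lam lam' s := by
  rw [fScale, if_neg hs.not_ge]
  exact lt_add_of_pos_right _
    (mul_pos (div_pos (tsub_pos_of_lt hl1') (tsub_pos_of_lt hl1)) (tsub_pos_of_lt hs))

lemma fScale_lt_one (hl : 0 < lam) (hl1 : lam < 1) (hl1' : lam' < 1) (hs : s < 1) :
    fScale lam lam' s < 1 := by
  rw [fScale]
  split_ifs with hsl
  · calc lam' / lam * s ≤ lam' / lam * lam := mul_le_mul_of_nonneg_left hsl zero_le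
      _ = lam' := div_mul_cancel₀ _ hl.ne'
      _ < 1 := hl1'
  · rw [← lt_tsub_iff_left]
    calc (1 - lam') / (1 - lam) * (s - lam)
        < (1 - lam') / (1 - lam) * (1 - lam) :=
          mul_lt_mul_of_pos_left (tsub_lt_tsub_right_of_le (not_le.1 hsl).le hs)
            (div_pos (tsub_pos_of_lt hl1') (tsub_pos_of_lt hl1))
      _ = 1 - lam' := div_mul_cancel₀ _ (tsub_pos_of_lt hl1).ne'

lemma fScale_same (hl : 0 < lam) (hl1 : lam < 1) : fScale lam lam s = s := by
  rw [fScale]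
  split_ifs with hs
  · rw [div_self hl.ne', one_mul]
  · rw [div_self (tsub_pos_of_lt hl1).ne', one_mul, add_tsub_cancel_of_le (not_le.1 hs).le]

lemma fScale_fScale (hl : 0 < lam) (hl1 : lam < 1) (hl' : 0 < lam') (hl1' : lam' < 1) :
    fScale lam' lam'' (fScale lam lam' s) = fScale lam lam'' s := by
  rcases lt_trichotomy s lam with hs | rfl | hs
  · rw [fScale, if_pos (fScale_lt_of_lt hl hl' hs).le, fScale, if_pos hs.le, fScale,
      if_pos hs.le, ← mul_assoc, div_mul_div_cancel₀ hl'.ne']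
  · rw [fScale_self_left hl, fScale_self_left hl', fScale_self_left hl]
  · rw [fScale, if_neg (lt_fScale_of_lt hl1 hl1' hs).not_ge, fScale, if_neg hs.not_ge, fScale,
      if_neg hs.not_ge, add_tsub_cancel_left, ← mul_assoc,
      div_mul_div_cancel₀ (tsub_pos_of_lt hl1').ne']

end fScale

section tauStep

variable {K : ℕ} {y y' y'' : ℝ≥0}

lemma tauStep_of_regEq (h : RegEq K y y') (t : ℝ≥0) :
    tauStep K y y' t = if IsNatVal y ∨ (K : ℝ≥0) < y then t
      else (⌊t⌋₊ : ℝ≥0) + fScale (1 - fracPart y) (1 - fracPart y') (fracPart t) := by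
  have hK := h.natCast_lt_iff le_rfl
  refine if_congr ⟨?_, fun hy => ?_⟩ rfl rfl
  · rintro (⟨hy, -⟩ | ⟨hy, -⟩)
    exacts [Or.inl hy, Or.inr hy]
  · rcases h.isNatVal_or_lt_iff.1 hy, hy with ⟨hy' | hy', hy | hy⟩
    exacts [Or.inl ⟨hy, hy'⟩, Or.inr ⟨hy, hK.1 hy⟩, Or.inr ⟨hK.2 hy', hy'⟩, Or.inr ⟨hy, hy'⟩]

lemma tauStep_self (K : ℕ) (y t : ℝ≥0) : tauStep K y y t = t := by
  rw [tauStep_of_regEq (RegEq.refl K y)]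
  split_ifs with hy
  · rfl
  · rw [fScale_same (one_sub_fracPart_pos y) (one_sub_fracPart_lt_one fun h => hy (Or.inl h)),
      natCast_floor_add_fracPart]

lemma tauStep_tauStep (h : RegEq K y y') (h' : RegEq K y' y'') (t : ℝ≥0) :
    tauStep K y' y'' (tauStep K y y' t) = tauStep K y y'' t := by
  rw [tauStep_of_regEq h, tauStep_of_regEq h', tauStep_of_regEq (h.trans h')]
  by_cases hy : IsNatVal y ∨ (K : ℝ≥0) < y
  · rw [if_pos hy, if_pos (h.isNatVal_or_lt_iff.1 hy), if_pos hy]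
  · have hy' := mt h.isNatVal_or_lt_iff.2 hy
    have hy'' := mt h'.isNatVal_or_lt_iff.2 hy'
    have hlt := one_sub_fracPart_lt_one fun h => hy (Or.inl h)
    have hlt' := one_sub_fracPart_lt_one fun h => hy' (Or.inl h)
    have hf := fScale_lt_one (one_sub_fracPart_pos y) hlt hlt' (fracPart_lt_one t)
    rw [if_neg hy, if_neg hy', if_neg hy, floor_natCast_add _ hf, fracPart_natCast_add _ hf,
      fScale_fScale (one_sub_fracPart_pos y) hlt (one_sub_fracPart_pos y') hlt']

lemma regEq_natCast_add (n : ℕ) {β β' : ℝ≥0} (hβ : β < 1) (hβ' : β' < 1)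
    (h0 : β = 0 ↔ β' = 0) : RegEq K (n + β) (n + β') :=
  Or.inl ⟨by rw [floor_natCast_add n hβ, floor_natCast_add n hβ'],
    by rw [fracPart_natCast_add n hβ, fracPart_natCast_add n hβ']; exact h0⟩

lemma regEq_natCast_add_of_one_lt (n : ℕ) {β β' : ℝ≥0} (hβ : 1 < β) (hβ' : 1 < β')
    (hβ2 : β < 2) (hβ2' : β' < 2) : RegEq K (n + β) (n + β') := by
  have carry : ∀ {γ : ℝ≥0}, 1 < γ → (n : ℝ≥0) + γ = ((n + 1 : ℕ) : ℝ≥0) + (γ - 1) :=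
    fun hγ => by rw [Nat.cast_succ, add_assoc, add_tsub_cancel_of_le hγ.le]
  rw [carry hβ, carry hβ']
  refine regEq_natCast_add _ ?_ ?_ (iff_of_false (tsub_pos_of_lt hβ).ne' (tsub_pos_of_lt hβ').ne')
  · rwa [tsub_lt_iff_left hβ.le, one_add_one_eq_two]
  · rwa [tsub_lt_iff_left hβ'.le, one_add_one_eq_two]

/-- The crossing of the next integer happens on both sides at the same time, since `fScale`
maps `1 - α` to `1 - α'` monotonically. -/
lemma regEq_natCast_add_fScale (n : ℕ) {α α' s : ℝ≥0} (hα : 0 < α) (hα' : 0 < α')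
    (hα1 : α < 1) (hα1' : α' < 1) (hs : s < 1) :
    RegEq K (n + (α + s)) (n + (α' + fScale (1 - α) (1 - α') s)) := by
  have hl : 0 < 1 - α := tsub_pos_of_lt hα1
  have hl' : 0 < 1 - α' := tsub_pos_of_lt hα1'
  have hl1 : 1 - α < 1 := tsub_lt_self one_pos hα
  have hl1' : 1 - α' < 1 := tsub_lt_self one_pos hα'
  rcases lt_trichotomy s (1 - α) with hc | hc | hc
  · have hf := fScale_lt_of_lt hl hl' hc
    refine regEq_natCast_add n (lt_tsub_iff_left.1 hc) (lt_tsub_iff_left.1 hf) ?_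
    exact iff_of_false (add_pos_of_pos_of_nonneg hα zero_le).ne'
      (add_pos_of_pos_of_nonneg hα' zero_le).ne'
  · rw [hc, fScale_self_left hl, add_tsub_cancel_of_le hα1.le, add_tsub_cancel_of_le hα1'.le]
    exact RegEq.refl K _
  · have hf := lt_fScale_of_lt hl1 hl1' hc
    refine regEq_natCast_add_of_one_lt n ((tsub_lt_iff_left hα1.le).1 hc)
      ((tsub_lt_iff_left hα1'.le).1 hf) ?_ ?_
    · rw [← one_add_one_eq_two]; exact add_lt_add hα1 hs
    · rw [← one_add_one_eq_two]
      exact add_lt_add hα1' (fScale_lt_one hl hl1 hl1' hs)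

lemma RegEq.add_tauStep (h : RegEq K y y') (t : ℝ≥0) :
    RegEq K (y + t) (y' + tauStep K y y' t) := by
  have hK := h.natCast_lt_iff le_rfl
  rw [tauStep_of_regEq h]
  split_ifs with hy
  · rcases hy with hy | hy
    · rcases h with ⟨hfl, hfr⟩ | ⟨hyK, hyK'⟩
      · have hfy := (fracPart_eq_zero_iff y).2 hy
        obtain rfl : y = y' := by
          rw [← natCast_floor_add_fracPart y, ← natCast_floor_add_fracPart y', hfl, hfy,
            hfr.1 hfy]
        exact RegEq.refl K _
      · exact Or.inr ⟨hyK.trans_le le_self_add, hyK'.trans_le le_self_add⟩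
    · exact Or.inr ⟨hy.trans_le le_self_add, (hK.1 hy).trans_le le_self_add⟩
  · have hy' := mt h.isNatVal_or_lt_iff.2 hy
    have split : ∀ (x : ℝ≥0) (n : ℕ) (g : ℝ≥0),
        x + ((n : ℝ≥0) + g) = ((⌊x⌋₊ + n : ℕ) : ℝ≥0) + (fracPart x + g) := fun x n g => by
      conv_lhs => rw [← natCast_floor_add_fracPart x]
      push_cast
      ring
    have ht : y + t = y + ((⌊t⌋₊ : ℝ≥0) + fracPart t) := by rw [natCast_floor_add_fracPart]
    rw [ht, split, split, ← h.floor_eq fun hyK => hy (Or.inr hyK)]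
    have hpos : ∀ {x : ℝ≥0}, ¬ IsNatVal x → 0 < fracPart x :=
      fun hx => pos_iff_ne_zero.2 (mt (fracPart_eq_zero_iff _).1 hx)
    exact regEq_natCast_add_fScale _ (hpos fun h => hy (Or.inl h))
      (hpos fun h => hy' (Or.inl h)) (fracPart_lt_one y) (fracPart_lt_one y') (fracPart_lt_one t)

end tauStep

lemma resetStep_resetStep (K : ℕ) (v : ℝ≥0) : resetStep K (resetStep K v) = resetStep K v := by
  unfold resetStep
  split_ifs <;> simp_all

section tauWAux

variable {A : Type} {K : ℕ} {y y' y'' : ℝ≥0}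

lemma tauWAux_self (K : ℕ) (y : ℝ≥0) (w : TimedWord A) : tauWAux K y y w = w := by
  induction w generalizing y with
  | nil => rfl
  | cons p w ih => rw [tauWAux, tauStep_self, ih]

lemma tauWAux_tauWAux (h : RegEq K y y') (h' : RegEq K y' y'') (w : TimedWord A) :
    tauWAux K y' y'' (tauWAux K y y' w) = tauWAux K y y'' w := by
  induction w generalizing y y' y'' with
  | nil => rfl
  | cons p w ih =>
    have hcomp := tauStep_tauStep h h' p.1
    have hnext' := (h'.add_tauStep (tauStep K y y' p.1)).resetStep
    rw [hcomp] at hnext'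
    simp only [tauWAux]
    rw [hcomp, ih (h.add_tauStep p.1).resetStep hnext']

lemma tauWAux_leftInverse (h : RegEq K y y') :
    Function.LeftInverse (tauWAux K y' y) (tauWAux K y y' : TimedWord A → TimedWord A) :=
  fun w => by rw [tauWAux_tauWAux h h.symm, tauWAux_self]

lemma tauWAux_bijective (h : RegEq K y y') :
    Function.Bijective (tauWAux K y y' : TimedWord A → TimedWord A) :=
  ⟨(tauWAux_leftInverse h).injective, (tauWAux_leftInverse h.symm).surjective⟩

end tauWAux

section cKW

variable {A : Type} (K : ℕ)

lemma cKW_append (u : TimedWord A) (t : ℝ≥0) (a : A) :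
    cKW K (u ++ [(t, a)]) = resetStep K (cKW K u + t) := by
  suffices ∀ (d : Timestamp) v, cKAux K v (d ++ [t]) = resetStep K (cKAux K v d + t) by
    simpa [cKW, cK] using this (u.map Prod.fst) 0
  intro d
  induction d with
  | nil => exact fun _ => rfl
  | cons s d ih => exact fun v => ih _

lemma resetStep_cKW (u : TimedWord A) : resetStep K (cKW K u) = cKW K u := by
  suffices ∀ (d : Timestamp) v, resetStep K v = v → resetStep K (cKAux K v d) = cKAux K v d from
    this _ 0 (if_pos ⟨0, K.zero_le, Nat.cast_zero.symm⟩)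
  intro d
  induction d with
  | nil => exact fun _ hv => hv
  | cons t d ih => exact fun v _ => ih _ (resetStep_resetStep K _)

lemma tauW_cKW (u v : TimedWord A) :
    (tauW K (cKW K u) (cKW K v) : TimedWord A → TimedWord A) = tauWAux K (cKW K u) (cKW K v) := by
  funext w
  rw [tauW, resetStep_cKW, resetStep_cKW]

lemma tauWAux_cKW_cons (u v w : TimedWord A) (t : ℝ≥0) (a : A) :
    tauWAux K (cKW K u) (cKW K v) ((t, a) :: w) =
      (tauStep K (cKW K u) (cKW K v) t, a) ::
        tauWAux K (cKW K (u ++ [(t, a)]))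
          (cKW K (v ++ [(tauStep K (cKW K u) (cKW K v) t, a)])) w := by
  rw [tauWAux, cKW_append, cKW_append]

end cKW

namespace Steps

variable {A : Type} {M : TA A}

lemma append {c c' c'' : M.Q × ℝ≥0} {u w : TimedWord A} (h : Steps M c u c')
    (h' : Steps M c' w c'') : Steps M c (u ++ w) c'' := by
  induction h with
  | nil => exact h'
  | cons θ hθ hsrc hlab hg _ ih => exact .cons θ hθ hsrc hlab hg (ih h')

lemma exists_of_append {u w : TimedWord A} {c c'' : M.Q × ℝ≥0} (h : Steps M c (u ++ w) c'') :
    ∃ c', Steps M c u c' ∧ Steps M c' w c'' := by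
  induction u generalizing c with
  | nil => exact ⟨c, .nil c, h⟩
  | cons p u ih =>
    cases h with
    | cons θ hθ hsrc hlab hg hrest =>
      obtain ⟨c', h₁, h₂⟩ := ih hrest
      exact ⟨c', .cons θ hθ hsrc hlab hg h₁, h₂⟩

lemma right_unique (hdet : M.Deterministic) {w : TimedWord A} {c c₁ c₂ : M.Q × ℝ≥0}
    (h₁ : Steps M c w c₁) (h₂ : Steps M c w c₂) : c₁ = c₂ := by
  induction h₁ with
  | nil => cases h₂; rfl
  | cons θ₁ hθ₁ hsrc₁ hlab₁ hg₁ _ ih =>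
    cases h₂ with
    | cons θ₂ hθ₂ hsrc₂ hlab₂ hg₂ hrest₂ =>
      obtain rfl : θ₁ = θ₂ := by
        by_contra hne
        exact hdet θ₁ hθ₁ θ₂ hθ₂ hne (hsrc₁.trans hsrc₂.symm) (hlab₁.trans hlab₂.symm) _
          ⟨hg₁, hg₂⟩
      exact ih hrest₂

end Steps

section runs

variable {A : Type} {K : ℕ} {M : TA A}

/-- Equality guards reset, and the other strict guards only hold at non-integers or above `K`. -/
lemma ite_reset_eq_resetStep (hstrict : M.IsStrict K) (hmax : M.MaxConstLE K)
    {θ : TTrans M.Q A} (hθ : θ ∈ M.trans) {ν : ℝ≥0} (hg : θ.guard.sat ν) :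
    (if θ.reset then 0 else ν) = resetStep K ν := by
  obtain ⟨hsg, hiff⟩ := hstrict θ hθ
  by_cases hr : θ.reset
  · obtain ⟨m, hm⟩ := hiff.2 hr
    have hmK : m ≤ K := by simpa [hm, CC.maxConst] using hmax θ hθ
    rw [hm] at hg
    rw [if_pos hr, resetStep, if_pos ⟨m, hmK, hg⟩]
  · rw [if_neg hr, resetStep, if_neg]
    rintro ⟨m', hm', rfl⟩
    rcases hsg with he | ⟨m, hm⟩ | hK
    · exact hr (hiff.1 he)
    · rw [hm] at hg
      obtain ⟨hg₁, hg₂⟩ : (m : ℝ≥0) < m' ∧ (m' : ℝ≥0) < (m + 1 : ℕ) := hg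
      norm_cast at hg₁ hg₂
      omega
    · rw [hK] at hg
      exact (Nat.cast_le.2 hm').not_gt hg

lemma Steps.snd_eq_cKAux (hstrict : M.IsStrict K) (hmax : M.MaxConstLE K) {w : TimedWord A}
    {q p : M.Q} {v ν : ℝ≥0} (h : Steps M (q, v) w (p, ν)) :
    ν = cKAux K v (w.map Prod.fst) := by
  induction w generalizing q v with
  | nil => cases h; rfl
  | cons x w ih =>
    cases h with
    | cons θ hθ hsrc hlab hg hrest =>
      rw [ite_reset_eq_resetStep hstrict hmax hθ hg] at hrest
      exact ih hrest

lemma Steps.snd_eq_cKW (hstrict : M.IsStrict K) (hmax : M.MaxConstLE K) {w : TimedWord A}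
    {q p : M.Q} {ν : ℝ≥0} (h : Steps M (q, 0) w (p, ν)) : ν = cKW K w :=
  h.snd_eq_cKAux hstrict hmax

lemma Steps.tauWAux (hstrict : M.IsStrict K) (hmax : M.MaxConstLE K) {w : TimedWord A}
    {q p : M.Q} {x x' y : ℝ≥0} (hx : RegEq K x x') (h : Steps M (q, x) w (p, y)) :
    ∃ y', Steps M (q, x') (IRTA.tauWAux K x x' w) (p, y') := by
  induction w generalizing q x x' with
  | nil => cases h; exact ⟨x', .nil _⟩
  | cons e w ih =>
    obtain ⟨t, a⟩ := e
    cases h with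
    | cons θ hθ hsrc hlab hg hrest =>
      have hadd := hx.add_tauStep t
      have hg' := (CC.sat_iff_of_regEq hadd θ.guard (hmax θ hθ)).1 hg
      rw [ite_reset_eq_resetStep hstrict hmax hθ hg] at hrest
      obtain ⟨y', h'⟩ := ih hadd.resetStep hrest
      refine ⟨y', .cons θ hθ hsrc hlab hg' ?_⟩
      rwa [ite_reset_eq_resetStep hstrict hmax hθ hg']

lemma tauWAux_mem_langFrom_iff (hstrict : M.IsStrict K) (hmax : M.MaxConstLE K) {q : M.Q}
    {x x' : ℝ≥0} (hx : RegEq K x x') (w : TimedWord A) :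
    tauWAux K x x' w ∈ M.LangFrom (q, x') ↔ w ∈ M.LangFrom (q, x) := by
  constructor
  · rintro ⟨p, ν, h, hp⟩
    obtain ⟨ν', h'⟩ := h.tauWAux hstrict hmax hx.symm
    exact ⟨p, ν', tauWAux_leftInverse hx w ▸ h', hp⟩
  · rintro ⟨p, ν, h, hp⟩
    obtain ⟨ν', h'⟩ := h.tauWAux hstrict hmax hx
    exact ⟨p, ν', h', hp⟩

lemma append_mem_lang_iff (hdet : M.Deterministic) {u : TimedWord A} {c : M.Q × ℝ≥0}
    (hu : Steps M (M.init, 0) u c) (w : TimedWord A) : u ++ w ∈ M.Lang ↔ w ∈ M.LangFrom c := by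
  constructor
  · rintro ⟨p, ν, h, hp⟩
    obtain ⟨c', hu', hw⟩ := h.exists_of_append
    exact ⟨p, ν, hu.right_unique hdet hu' ▸ hw, hp⟩
  · rintro ⟨p, ν, h, hp⟩
    exact ⟨p, ν, hu.append h, hp⟩

end runs

section approxLK

variable {A : Type} {K : ℕ} {L : Set (TimedWord A)}

lemma approxLK_iff {u v : TimedWord A} :
    ApproxLK L K u v ↔ RegEq K (cKW K u) (cKW K v) ∧
      ∀ w, u ++ w ∈ L ↔ v ++ tauWAux K (cKW K u) (cKW K v) w ∈ L := by
  rw [ApproxLK, tauW_cKW]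
  refine and_congr_right fun h => ?_
  rw [← Set.eq_preimage_iff_image_eq (tauWAux_bijective h), Set.ext_iff]
  rfl

lemma approxLK_equivalence : Equivalence (ApproxLK L K) where
  refl u := approxLK_iff.2 ⟨RegEq.refl K _, fun w => by rw [tauWAux_self]⟩
  symm {u v} h := by
    obtain ⟨hreg, hmem⟩ := approxLK_iff.1 h
    refine approxLK_iff.2 ⟨hreg.symm, fun w => ?_⟩
    rw [hmem, tauWAux_leftInverse hreg.symm w]
  trans {u v z} h h' := by
    obtain ⟨hreg, hmem⟩ := approxLK_iff.1 h
    obtain ⟨hreg', hmem'⟩ := approxLK_iff.1 h'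
    exact approxLK_iff.2 ⟨hreg.trans hreg', fun w => by
      rw [hmem, hmem', tauWAux_tauWAux hreg hreg']⟩

lemma approxLK_append_tauStep {u v : TimedWord A} (h : ApproxLK L K u v) (t : ℝ≥0) (a : A) :
    ApproxLK L K (u ++ [(t, a)]) (v ++ [(tauStep K (cKW K u) (cKW K v) t, a)]) := by
  obtain ⟨hreg, hmem⟩ := approxLK_iff.1 h
  refine approxLK_iff.2 ⟨?_, fun w => ?_⟩
  · rw [cKW_append, cKW_append]
    exact (hreg.add_tauStep t).resetStep
  · simpa [tauWAux_cKW_cons] using hmem ((t, a) :: w)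

lemma append_mem_iff_of_kMonotonic {r : TimedWord A → TimedWord A → Prop}
    (hmono : KMonotonic K r) (hpres : LPreserving L r) (w : TimedWord A) :
    ∀ u v, r u v → (u ++ w ∈ L ↔ v ++ tauWAux K (cKW K u) (cKW K v) w ∈ L) := by
  induction w with
  | nil =>
    simp only [tauWAux, List.append_nil]
    exact hpres
  | cons p w ih =>
    intro u v huv
    obtain ⟨hreg, hext⟩ := hmono u v huv
    have := ih _ _ (hext p.2 p.1 _ (hreg.add_tauStep p.1))
    rw [tauWAux_cKW_cons]
    simpa using this

lemma approxLK_of_kMonotonic {r : TimedWord A → TimedWord A → Prop} (hmono : KMonotonic K r)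
    (hpres : LPreserving L r) {u v : TimedWord A} (huv : r u v) : ApproxLK L K u v :=
  approxLK_iff.2 ⟨(hmono u v huv).1, fun w => append_mem_iff_of_kMonotonic hmono hpres w u v huv⟩

variable {M : TA A}

lemma approxLK_of_sameState (hdet : M.Deterministic) (hstrict : M.IsStrict K)
    (hmax : M.MaxConstLE K) {u v : TimedWord A} (huv : M.SameState u v)
    (hreg : RegEq K (cKW K u) (cKW K v)) : ApproxLK M.Lang K u v := by
  obtain ⟨q, ν, ν', hu, hv⟩ := huv
  obtain rfl := hu.snd_eq_cKW hstrict hmax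
  obtain rfl := hv.snd_eq_cKW hstrict hmax
  refine approxLK_iff.2 ⟨hreg, fun w => ?_⟩
  rw [append_mem_lang_iff hdet hu, append_mem_lang_iff hdet hv,
    tauWAux_mem_langFrom_iff hstrict hmax hreg]

lemma sameState_append_of_regEq (hcomp : M.Complete) (hstrict : M.IsStrict K)
    (hmax : M.MaxConstLE K) (v : TimedWord A) {t₁ t₂ : ℝ≥0} (a : A)
    (hreg : RegEq K (cKW K v + t₁) (cKW K v + t₂)) :
    M.SameState (v ++ [(t₁, a)]) (v ++ [(t₂, a)]) := by
  obtain ⟨c, hc⟩ := hcomp (v ++ [(t₁, a)])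
  obtain ⟨⟨q, ν⟩, hv, hlast⟩ := hc.exists_of_append
  obtain rfl := hv.snd_eq_cKW hstrict hmax
  cases hlast with
  | cons θ hθ hsrc hlab hg _ =>
    have hg' := (CC.sat_iff_of_regEq hreg θ.guard (hmax θ hθ)).1 hg
    exact ⟨θ.dst, _, _, hv.append (.cons θ hθ hsrc hlab hg (.nil _)),
      hv.append (.cons θ hθ hsrc hlab hg' (.nil _))⟩

lemma kMonotonic_approxLK (hM : IsKAcceptor M K) : KMonotonic K (ApproxLK M.Lang K) := by
  obtain ⟨-, hcomp, hdet, -, hstrict, hmax, hacc⟩ := hM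
  intro u v huv
  refine ⟨huv.1, fun a t t' ht => ?_⟩
  have hreg := ((approxLK_iff.1 huv).1.add_tauStep t).symm.trans ht
  have hss := sameState_append_of_regEq hcomp hstrict hmax v a hreg
  exact approxLK_equivalence.trans (approxLK_append_tauStep huv t a)
    (approxLK_of_sameState hdet hstrict hmax hss (hacc _ _ hss))

lemma finiteIndex_of_forall_exists_state {Q : Type} [Finite Q]
    {r : TimedWord A → TimedWord A → Prop} (hr : Equivalence r) (P : TimedWord A → Q → Prop) (hP : ∀ u, ∃ q, P u q)
    (hPr : ∀ u v q, P u q → P v q → r u v) : FiniteIndex r := by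
  refine (Set.finite_range fun q => {z | ∃ u, P u q ∧ r u z}).subset ?_
  rintro _ ⟨u, rfl⟩
  obtain ⟨q, hq⟩ := hP u
  refine ⟨q, Set.ext fun z => ⟨?_, fun hz => ⟨u, hq, hz⟩⟩⟩
  rintro ⟨u', hu', hz⟩
  exact hr.trans (hPr u u' q hq hu') hz

lemma finiteIndex_approxLK (hM : IsKAcceptor M K) : FiniteIndex (ApproxLK M.Lang K) := by
  obtain ⟨⟨hfin, -⟩, hcomp, hdet, -, hstrict, hmax, hacc⟩ := hM
  refine finiteIndex_of_forall_exists_state approxLK_equivalence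
    (fun u q => ∃ ν, Steps M (M.init, 0) u (q, ν)) (fun u => ?_) fun u v q ⟨ν, hu⟩ ⟨ν', hv⟩ => ?_
  · obtain ⟨⟨q, ν⟩, h⟩ := hcomp u
    exact ⟨q, ν, h⟩
  · have hss : M.SameState u v := ⟨q, ν, ν', hu, hv⟩
    exact approxLK_of_sameState hdet hstrict hmax hss (hacc u v hss)

end approxLK

theorem statement12_general {A : Type} (K : ℕ) (L : Set (TimedWord A))
    (B : TA A) (hB : IsKAcceptor B K) (hL : B.Lang = L) :
    FiniteIndex (ApproxLK L K) ∧ KMonotonic K (ApproxLK L K) ∧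
      ∀ r : TimedWord A → TimedWord A → Prop,
        Equivalence r → KMonotonic K r → LPreserving L r →
          ∀ u v : TimedWord A, r u v → ApproxLK L K u v := by
  subst hL
  exact ⟨finiteIndex_approxLK hB, kMonotonic_approxLK hB,
    fun _ _ hmono hpres _ _ => approxLK_of_kMonotonic hmono hpres⟩

/-- for `L` definable by a `K`-acceptor, `≈^{L,K}` has finite index,
is `K`-monotonic, and is the coarsest `K`-monotonic `L`-preserving equivalence. -/
theorem statement12 {A : Type} [Finite A] (K : ℕ) (L : Set (TimedWord A))
    (B : TA A) (hB : IsKAcceptor B K) (hL : B.Lang = L) :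
    FiniteIndex (ApproxLK L K) ∧ KMonotonic K (ApproxLK L K) ∧
      ∀ r : TimedWord A → TimedWord A → Prop,
        Equivalence r → KMonotonic K r → LPreserving L r →
          ∀ u v : TimedWord A, r u v → ApproxLK L K u v :=
  statement12_general K L B hB hL

end IRTA
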